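/- arXiv:2407.01079 — 2 statements merged into one kernel-verified Lean document; each statement's English description precedes it below -/
import Mathlib

section
/- Let d₀ ≥ 1 be an integer, C > 0, and r > 0 with C r² ≥ 2 d₀. Then ∫_{{h ∈ ℝ^{d₀} : ‖h‖₂ > r}} ‖h‖₂² · exp(−C‖h‖₂²/2) dh ≤ (2 d₀ π^{d₀/2} / (C Γ(d₀/2 + 1))) · r^{d₀} · exp(−C r²/2). -/
/-!
Polar coordinates turn the integral into `d₀ |B₁| ∫_r^∞ y^(d₀+1) e^(-Cy²/2) dy`, with
`|B₁| = π^(d₀/2) / Γ(d₀/2 + 1)`. For `y > r` we have `d₀ ≤ Cy²/2`, so the derivative of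
`y^d₀ e^(-Cy²/2)` is at most `-(C/2) y^(d₀+1) e^(-Cy²/2)`; the fundamental theorem of calculus
then bounds the radial tail by `(2/C) r^d₀ e^(-Cr²/2)`.
-/

open MeasureTheory Real Set Filter Metric Topology Module

section GaussianMomentTail

variable {b : ℝ}

lemma integrableOn_Ioi_pow_mul_exp_neg_mul_sq (n : ℕ) (hb : 0 < b) {r : ℝ} (hr : 0 ≤ r) :
    IntegrableOn (fun y : ℝ => y ^ n * exp (-b * y ^ 2)) (Ioi r) := by
  have := (integrableOn_rpow_mul_exp_neg_mul_sq hb (s := n)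
    (neg_one_lt_zero.trans_le n.cast_nonneg)).mono_set (Ioi_subset_Ioi hr)
  simpa only [rpow_natCast] using this

lemma tendsto_pow_mul_exp_neg_mul_sq_atTop (n : ℕ) (hb : 0 < b) :
    Tendsto (fun y : ℝ => y ^ n * exp (-b * y ^ 2)) atTop (𝓝 0) := by
  have := (rpow_mul_exp_neg_mul_sq_isLittleO_exp_neg hb n).tendsto_zero_of_tendsto
    (tendsto_exp_atBot.comp <| tendsto_id.const_mul_atTop_of_neg (neg_lt_zero.mpr one_half_pos))
  simpa only [rpow_natCast] using this

lemma hasDerivAt_pow_mul_exp_neg_mul_sq (n : ℕ) (b x : ℝ) :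
    HasDerivAt (fun y : ℝ => y ^ n * exp (-b * y ^ 2))
      (n * (x ^ (n - 1) * exp (-b * x ^ 2)) - 2 * b * (x ^ (n + 1) * exp (-b * x ^ 2))) x := by
  refine ((hasDerivAt_pow n x).fun_mul ((hasDerivAt_pow 2 x).const_mul (-b)).exp).congr_deriv ?_
  rw [pow_succ]; push_cast; ring

lemma integral_Ioi_pow_succ_mul_exp_neg_mul_sq_le {n : ℕ} (hb : 0 < b) {r : ℝ} (hr : 0 ≤ r)
    (hnr : n ≤ b * r ^ 2) :
    ∫ y in Ioi r, y ^ (n + 1) * exp (-b * y ^ 2) ≤ r ^ n * exp (-b * r ^ 2) / b := by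
  have hint := fun k => integrableOn_Ioi_pow_mul_exp_neg_mul_sq k hb hr
  have hftc := integral_Ioi_of_hasDerivAt_of_tendsto'
    (fun x _ => hasDerivAt_pow_mul_exp_neg_mul_sq n b x)
    (((hint (n - 1)).const_mul n).sub ((hint (n + 1)).const_mul (2 * b)))
    (tendsto_pow_mul_exp_neg_mul_sq_atTop n hb)
  have hpow : ∀ y ∈ Ioi r, n * y ^ (n - 1) ≤ b * y ^ (n + 1) := by
    intro y (hy : r < y)
    have hy2 : n ≤ b * y ^ 2 := hnr.trans (by gcongr)
    rcases n with _ | k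
    · simp only [CharP.cast_eq_zero, zero_mul]
      exact mul_nonneg hb.le (pow_nonneg (hr.trans hy.le) _)
    · calc ((k + 1 : ℕ) : ℝ) * y ^ (k + 1 - 1) ≤ b * y ^ 2 * y ^ k := by
            simp only [Nat.add_sub_cancel]
            exact mul_le_mul_of_nonneg_right hy2 (pow_nonneg (hr.trans hy.le) _)
        _ = b * y ^ (k + 1 + 1) := by ring
  calc ∫ y in Ioi r, y ^ (n + 1) * exp (-b * y ^ 2)
      = (∫ y in Ioi r, b * (y ^ (n + 1) * exp (-b * y ^ 2))) / b := by
        rw [integral_const_mul]; field_simp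
    _ ≤ (∫ y in Ioi r, -(n * (y ^ (n - 1) * exp (-b * y ^ 2))
          - 2 * b * (y ^ (n + 1) * exp (-b * y ^ 2)))) / b := by
        refine div_le_div_of_nonneg_right (setIntegral_mono_on ((hint (n + 1)).const_mul b)
          (((hint (n - 1)).const_mul n).sub ((hint (n + 1)).const_mul (2 * b))).neg
          measurableSet_Ioi fun y hy => ?_) hb.le
        nlinarith [hpow y hy, exp_pos (-b * y ^ 2)]
    _ = r ^ n * exp (-b * r ^ 2) / b := by
        rw [integral_neg, hftc, zero_sub, neg_neg]

end GaussianMomentTail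

section PolarCoordinates

variable {E F : Type*} [NormedAddCommGroup E] [NormedSpace ℝ E] [FiniteDimensional ℝ E]
  [MeasurableSpace E] [BorelSpace E] [NormedAddCommGroup F] [NormedSpace ℝ F]
  (μ : Measure E) [μ.IsAddHaarMeasure]

lemma setIntegral_lt_norm_fun_norm_addHaar (f : ℝ → F) {r : ℝ} (hr : 0 ≤ r) :
    ∫ x in {x : E | r < ‖x‖}, f ‖x‖ ∂μ
      = finrank ℝ E • μ.real (ball 0 1) • ∫ y in Ioi r, y ^ (finrank ℝ E - 1) • f y := by
  rcases subsingleton_or_nontrivial E with hE | hE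
  · have hempty : {x : E | r < ‖x‖} = ∅ := by
      ext x; simp [Subsingleton.elim x 0, hr.not_gt]
    simp [hempty, finrank_zero_of_subsingleton]
  have hsmul : ∀ y, y ^ (finrank ℝ E - 1) • (Ioi r).indicator f y
      = (Ioi r).indicator (fun y => y ^ (finrank ℝ E - 1) • f y) y := fun y =>
    ((Ioi r).indicator_const_smul_apply _ f y).symm
  calc ∫ x in {x : E | r < ‖x‖}, f ‖x‖ ∂μ = ∫ x, (Ioi r).indicator f ‖x‖ ∂μ := by
        rw [← integral_indicator (measurableSet_lt measurable_const measurable_norm)]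
        rfl
    _ = finrank ℝ E • μ.real (ball 0 1) •
          ∫ y in Ioi 0, y ^ (finrank ℝ E - 1) • (Ioi r).indicator f y :=
        integral_fun_norm_addHaar μ _
    _ = _ := by
        simp_rw [hsmul]
        rw [setIntegral_indicator measurableSet_Ioi, Ioi_inter_Ioi, sup_eq_right.mpr hr]

end PolarCoordinates

lemma EuclideanSpace.volume_real_ball_zero_one (n : ℕ) [NeZero n] :
    volume.real (ball (0 : EuclideanSpace ℝ (Fin n)) 1) = √π ^ n / Gamma (n / 2 + 1) := by
  rw [measureReal_def, EuclideanSpace.volume_ball, Fintype.card_fin, ENNReal.ofReal_one, one_pow,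
    one_mul, ENNReal.toReal_ofReal (by positivity)]

/-- Second-moment Gaussian tail integral bound: for `C r² ≥ 2 d₀`,
`∫_{‖h‖ > r} ‖h‖² exp(−C‖h‖²/2) dh ≤ (2 d₀ π^{d₀/2} / (C Γ(d₀/2 + 1))) r^{d₀} exp(−C r²/2)`. -/
theorem gaussian_tail_second_moment_bound
    (d₀ : ℕ) (hd₀ : 1 ≤ d₀) (C r : ℝ) (hC : 0 < C) (hr : 0 < r)
    (hCr : 2 * (d₀ : ℝ) ≤ C * r ^ 2) :
    (∫ h in {h : EuclideanSpace ℝ (Fin d₀) | r < ‖h‖}, ‖h‖ ^ 2 * Real.exp (-C * ‖h‖ ^ 2 / 2))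
      ≤ 2 * (d₀ : ℝ) * Real.pi ^ ((d₀ : ℝ) / 2) / (C * Real.Gamma ((d₀ : ℝ) / 2 + 1))
          * r ^ (d₀ : ℝ) * Real.exp (-C * r ^ 2 / 2) := by
  have : NeZero d₀ := ⟨by omega⟩
  have hradial (y : ℝ) :
      y ^ (d₀ - 1) • (y ^ 2 * exp (-C * y ^ 2 / 2)) = y ^ (d₀ + 1) * exp (-(C / 2) * y ^ 2) := by
    rw [smul_eq_mul, ← mul_assoc, ← pow_add, show d₀ - 1 + 2 = d₀ + 1 by omega]
    ring_nf
  have htail := integral_Ioi_pow_succ_mul_exp_neg_mul_sq_le (n := d₀) (half_pos hC) hr.le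
    (by linarith)
  have hsqrt : √π ^ d₀ = π ^ ((d₀ : ℝ) / 2) := by
    rw [sqrt_eq_rpow, ← rpow_natCast, ← rpow_mul pi_pos.le, one_div_mul_eq_div]
  rw [setIntegral_lt_norm_fun_norm_addHaar volume (fun y => y ^ 2 * exp (-C * y ^ 2 / 2)) hr.le,
    finrank_euclideanSpace_fin, EuclideanSpace.volume_real_ball_zero_one, nsmul_eq_mul,
    smul_eq_mul]
  simp_rw [hradial]
  calc _ ≤ d₀ * (√π ^ d₀ / Gamma (d₀ / 2 + 1) * (r ^ d₀ * exp (-(C / 2) * r ^ 2) / (C / 2))) :=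
        by gcongr
    _ = _ := by
        rw [hsqrt, rpow_natCast, show -(C / 2) * r ^ 2 = -C * r ^ 2 / 2 by ring]
        field_simp
end

section
/- Let L, k₁, k₂ ≥ 1, ε₁, ε₂ ≥ 0, and let F, Q ∈ ℝ^{L×L}, U₁, V₁ ∈ ℝ^{L×k₁}, U₂, V₂ ∈ ℝ^{L×k₂}. Write F̃ := U₁V₁ᵀ and Q̃ := U₂V₂ᵀ, and assume ‖F̃ − F‖_max ≤ ε₁ and ‖Q̃ − Q‖_max ≤ ε₂. Define r, r̃ ∈ ℝ^L by r_j := ⟨F[j,·], Q[j,·]⟩ and r̃_j := ⟨F̃[j,·], Q̃[j,·]⟩, and let P₂ := diag(r) F ∈ ℝ^{L×L} (so the j-th row of P₂ is r_j F[j,·]). Then the rank-k₁ matrix (diag(r̃) U₁) V₁ᵀ = diag(r̃) F̃ satisfies ‖diag(r̃) F̃ − P₂‖_max ≤ (max_{1≤j≤L} |r̃_j|) · ε₁ + L · ( ‖F̃‖_max · ε₂ + ε₁ · ‖Q‖_max ) · ‖F‖_max. -/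
/-! Writing `r̃ F̃ - r F = r̃ (F̃ - F) + (r̃ - r) F` entrywise reduces the bound to one on
`|r̃_j - r_j|`, and the same splitting inside the row inner products gives
`|r̃_j - r_j| ≤ L (‖F̃‖_max ε₂ + ε₁ ‖Q‖_max)`. -/

open Matrix BigOperators

noncomputable def maxNorm {m n : ℕ} (A : Matrix (Fin m) (Fin n) ℝ) : ℝ :=
  ⨆ p : Fin m × Fin n, |A p.1 p.2|

lemma abs_mul_sub_mul_le {R : Type*} [CommRing R] [LinearOrder R] [IsStrictOrderedRing R]
    {a a' b b' α β δ ε : R} (ha' : |a'| ≤ α) (hb : |b' - b| ≤ δ) (ha : |a' - a| ≤ ε)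
    (hb' : |b| ≤ β) : |a' * b' - a * b| ≤ α * δ + ε * β :=
  calc |a' * b' - a * b| = |a' * (b' - b) + (a' - a) * b| := by ring_nf
    _ ≤ |a'| * |b' - b| + |a' - a| * |b| := by
      rw [← abs_mul, ← abs_mul]
      exact abs_add_le _ _
    _ ≤ α * δ + ε * β := add_le_add
      (mul_le_mul ha' hb (abs_nonneg _) ((abs_nonneg _).trans ha'))
      (mul_le_mul ha hb' (abs_nonneg _) ((abs_nonneg _).trans ha))

lemma abs_dotProduct_sub_dotProduct_le {R ι : Type*} [CommRing R] [LinearOrder R]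
    [IsStrictOrderedRing R] [Fintype ι] {x x' y y' : ι → R} {a b δ ε : R}
    (hx' : ∀ k, |x' k| ≤ a) (hy : ∀ k, |y' k - y k| ≤ δ) (hx : ∀ k, |x' k - x k| ≤ ε)
    (hy' : ∀ k, |y k| ≤ b) :
    |x' ⬝ᵥ y' - x ⬝ᵥ y| ≤ Fintype.card ι * (a * δ + ε * b) := by
  calc |x' ⬝ᵥ y' - x ⬝ᵥ y| = |∑ k, (x' k * y' k - x k * y k)| := by
        rw [dotProduct, dotProduct, Finset.sum_sub_distrib]
    _ ≤ ∑ k, |x' k * y' k - x k * y k| := Finset.abs_sum_le_sum_abs _ _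
    _ ≤ ∑ _k : ι, (a * δ + ε * b) := by
        gcongr with k
        exact abs_mul_sub_mul_le (hx' k) (hy k) (hx k) (hy' k)
    _ = Fintype.card ι * (a * δ + ε * b) := by
        rw [Finset.sum_const, Finset.card_univ, nsmul_eq_mul]

section MaxNorm

variable {m n : ℕ}

lemma abs_le_maxNorm (A : Matrix (Fin m) (Fin n) ℝ) (i : Fin m) (j : Fin n) :
    |A i j| ≤ maxNorm A :=
  le_ciSup (Set.finite_range fun p : Fin m × Fin n => |A p.1 p.2|).bddAbove (i, j)

lemma maxNorm_nonneg (A : Matrix (Fin m) (Fin n) ℝ) : 0 ≤ maxNorm A :=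
  Real.iSup_nonneg fun _ => abs_nonneg _

lemma maxNorm_le {A : Matrix (Fin m) (Fin n) ℝ} {c : ℝ} (hc : 0 ≤ c)
    (h : ∀ i j, |A i j| ≤ c) : maxNorm A ≤ c :=
  Real.iSup_le (fun p => h p.1 p.2) hc

lemma maxNorm_diagonal_mul_sub_diagonal_mul_le (r r' : Fin m → ℝ)
    (A A' : Matrix (Fin m) (Fin n) ℝ) :
    maxNorm (diagonal r' * A' - diagonal r * A)
      ≤ (⨆ j, |r' j|) * maxNorm (A' - A) + (⨆ j, |r' j - r j|) * maxNorm A := by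
  have hr' : ∀ j, |r' j| ≤ ⨆ j, |r' j| := le_ciSup (Finite.bddAbove_range _)
  have hdr : ∀ j, |r' j - r j| ≤ ⨆ j, |r' j - r j| := le_ciSup (Finite.bddAbove_range _)
  have hbound_nonneg : 0 ≤ (⨆ j, |r' j|) * maxNorm (A' - A) + (⨆ j, |r' j - r j|) * maxNorm A :=
    add_nonneg (mul_nonneg (Real.iSup_nonneg fun _ => abs_nonneg _) (maxNorm_nonneg _))
      (mul_nonneg (Real.iSup_nonneg fun _ => abs_nonneg _) (maxNorm_nonneg _))
  refine maxNorm_le hbound_nonneg fun i j => ?_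
  rw [Matrix.sub_apply, diagonal_mul, diagonal_mul]
  exact abs_mul_sub_mul_le (hr' i) (abs_le_maxNorm (A' - A) i j) (hdr i) (abs_le_maxNorm A i j)

end MaxNorm

theorem diag_row_inner_low_rank_approximation_general
    (L k₁ k₂ : ℕ)
    (ε₁ ε₂ : ℝ)
    (F Q : Matrix (Fin L) (Fin L) ℝ)
    (U₁ V₁ : Matrix (Fin L) (Fin k₁) ℝ) (U₂ V₂ : Matrix (Fin L) (Fin k₂) ℝ)
    (h₁ : maxNorm (U₁ * V₁ᵀ - F) ≤ ε₁) (h₂ : maxNorm (U₂ * V₂ᵀ - Q) ≤ ε₂) :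
    maxNorm
        ((Matrix.diagonal (fun j => ∑ k, (U₁ * V₁ᵀ) j k * (U₂ * V₂ᵀ) j k) * U₁) * V₁ᵀ
          - Matrix.diagonal (fun j => ∑ k, F j k * Q j k) * F)
      ≤ (⨆ j : Fin L, |∑ k, (U₁ * V₁ᵀ) j k * (U₂ * V₂ᵀ) j k|) * ε₁
        + (L : ℝ) * (maxNorm (U₁ * V₁ᵀ) * ε₂ + ε₁ * maxNorm Q) * maxNorm F := by
  set F' := U₁ * V₁ᵀ
  set Q' := U₂ * V₂ᵀ
  have hε₁ : 0 ≤ ε₁ := (maxNorm_nonneg _).trans h₁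
  have hε₂ : 0 ≤ ε₂ := (maxNorm_nonneg _).trans h₂
  have hrow : ∀ j, |F' j ⬝ᵥ Q' j - F j ⬝ᵥ Q j|
      ≤ L * (maxNorm F' * ε₂ + ε₁ * maxNorm Q) := fun j => by
    simpa using abs_dotProduct_sub_dotProduct_le (fun k => abs_le_maxNorm F' j k)
      (fun k => (abs_le_maxNorm (Q' - Q) j k).trans h₂)
      (fun k => (abs_le_maxNorm (F' - F) j k).trans h₁) (fun k => abs_le_maxNorm Q j k)
  rw [Matrix.mul_assoc]
  refine (maxNorm_diagonal_mul_sub_diagonal_mul_le (fun j => F j ⬝ᵥ Q j)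
    (fun j => F' j ⬝ᵥ Q' j) F F').trans <| add_le_add
      (mul_le_mul_of_nonneg_left h₁ (Real.iSup_nonneg fun _ => abs_nonneg _))
      (mul_le_mul_of_nonneg_right (Real.iSup_le hrow ?_) (maxNorm_nonneg F))
  exact mul_nonneg L.cast_nonneg
    (add_nonneg (mul_nonneg (maxNorm_nonneg F') hε₂) (mul_nonneg hε₁ (maxNorm_nonneg Q)))

/-- Error bound for the low-rank approximation `diag(r̃) F̃ = (diag(r̃) U₁) V₁ᵀ` of the
rank-one-correction part `P₂ = diag(r) F` of the DiT gradient, where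
`r_j = ⟨F[j,·], Q[j,·]⟩` and `r̃_j = ⟨F̃[j,·], Q̃[j,·]⟩` with `F̃ = U₁V₁ᵀ`, `Q̃ = U₂V₂ᵀ`. -/
theorem diag_row_inner_low_rank_approximation
    (L k₁ k₂ : ℕ) (hL : 1 ≤ L) (hk₁ : 1 ≤ k₁) (hk₂ : 1 ≤ k₂)
    (ε₁ ε₂ : ℝ) (hε₁ : 0 ≤ ε₁) (hε₂ : 0 ≤ ε₂)
    (F Q : Matrix (Fin L) (Fin L) ℝ)
    (U₁ V₁ : Matrix (Fin L) (Fin k₁) ℝ) (U₂ V₂ : Matrix (Fin L) (Fin k₂) ℝ)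
    (h₁ : maxNorm (U₁ * V₁ᵀ - F) ≤ ε₁) (h₂ : maxNorm (U₂ * V₂ᵀ - Q) ≤ ε₂) :
    maxNorm
        ((Matrix.diagonal (fun j => ∑ k, (U₁ * V₁ᵀ) j k * (U₂ * V₂ᵀ) j k) * U₁) * V₁ᵀ
          - Matrix.diagonal (fun j => ∑ k, F j k * Q j k) * F)
      ≤ (⨆ j : Fin L, |∑ k, (U₁ * V₁ᵀ) j k * (U₂ * V₂ᵀ) j k|) * ε₁
        + (L : ℝ) * (maxNorm (U₁ * V₁ᵀ) * ε₂ + ε₁ * maxNorm Q) * maxNorm F :=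
  diag_row_inner_low_rank_approximation_general L k₁ k₂ ε₁ ε₂ F Q U₁ V₁ U₂ V₂ h₁ h₂
end
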